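/- arXiv:2401.15929 — 3 statements merged into one kernel-verified Lean document; each statement's English description precedes it below -/
import Mathlib

section
/- Let M be a unimodular lattice and L ⊆ M a sublattice (the restricted form on L nondegenerate) such that the quotient M/L is torsion-free. Let L⊥ = {x ∈ M : ⟨x,y⟩ = 0 for all y ∈ L}. Then the discriminant groups disc(L) and disc(L⊥) are isomorphic as abelian groups. -/
/-!
Restriction of `B` gives `φ : M → Dual L`, `x ↦ B x|_L`. Since `M/L` is finitely generated and
torsion-free over a PID it is free, so `L` is a direct summand of `M` and every functional on `L`
extends to `M`; as `B` is onto `Dual M`, `φ` is surjective. Its kernel is `L⊥` and the preimage of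
`BL(L)` is `L + L⊥`, whence `disc(L) ≅ M/(L + L⊥)`.

The same argument applies to `L⊥`: `M/L⊥` embeds into `Dual L`, so it is torsion-free, and
`L⊥⊥ = L` because the functionals vanishing on the direct summand `L` cut out exactly `L`.
Hence `disc(L⊥) ≅ M/(L⊥ + L)` as well.
-/

open Module LinearMap Submodule

namespace LinearMap

variable {R M Q : Type*} [CommRing R] [AddCommGroup M] [Module R M] [AddCommGroup Q] [Module R Q]

noncomputable def quotSupKerEquivOfSurjective (f : M →ₗ[R] Q) (hf : Function.Surjective f)
    (N : Submodule R M) : (M ⧸ (N ⊔ ker f)) ≃ₗ[R] Q ⧸ N.map f :=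
  (quotEquivOfEq _ _ (by rw [ker_comp, ker_mkQ, comap_map_eq])).trans
    (((N.map f).mkQ ∘ₗ f).quotKerEquivOfSurjective ((N.map f).mkQ_surjective.comp hf))

theorem isTorsionFree_quotient_ker [IsDomain R] [IsTorsionFree R Q] (f : M →ₗ[R] Q) :
    IsTorsionFree R (M ⧸ ker f) :=
  (ker_eq_bot.mp ((ker f).ker_liftQ_eq_bot' f rfl)).moduleIsTorsionFree _ (map_smul _)

end LinearMap

namespace Submodule

variable {R M : Type*} [CommRing R] [AddCommGroup M] [Module R M] (N : Submodule R M)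

theorem exists_leftInverse_subtype_of_projective [Projective R (M ⧸ N)] :
    ∃ r : M →ₗ[R] N, r ∘ₗ N.subtype = LinearMap.id := by
  obtain ⟨s, hs⟩ := projective_lifting_property N.mkQ LinearMap.id N.mkQ_surjective
  have hexact := LinearMap.exact_subtype_mkQ N
  exact ⟨_, ((hexact.splitInjectiveEquiv N.mkQ_surjective).symm
    (hexact.splitSurjectiveEquiv N.injective_subtype ⟨s, hs⟩)).2⟩

theorem dualRestrict_surjective_of_projective [Projective R (M ⧸ N)] :
    Function.Surjective N.dualRestrict := by
  obtain ⟨r, hr⟩ := N.exists_leftInverse_subtype_of_projective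
  exact fun f => ⟨f ∘ₗ r, by rw [dualRestrict_def, dualMap_apply', comp_assoc, hr, comp_id]⟩

theorem dualCoannihilator_dualAnnihilator_eq_of_projective [Projective R (M ⧸ N)] :
    N.dualAnnihilator.dualCoannihilator = N := by
  refine le_antisymm (fun x hx => ?_) N.le_dualAnnihilator_dualCoannihilator
  by_contra hxN
  obtain ⟨f, hfx, hf⟩ := N.exists_dual_map_eq_bot_of_notMem hxN inferInstance
  refine hfx ((mem_dualCoannihilator x).mp hx f ((mem_dualAnnihilator f).mpr fun w hw => ?_))
  rw [← mem_bot R, ← hf]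
  exact mem_map_of_mem hw

variable {B : M →ₗ[R] M →ₗ[R] R}

theorem ker_dualRestrict_comp_eq_orthogonalBilin (hB : B.IsRefl) :
    ker (N.dualRestrict ∘ₗ B) = N.orthogonalBilin B := by
  ext x
  simp only [mem_ker, mem_orthogonalBilin_iff, LinearMap.ext_iff, comp_apply, dualRestrict_apply,
    LinearMap.zero_apply, Subtype.forall, hB.eq_iff]

theorem orthogonalBilin_orthogonalBilin_of_projective (hB : B.IsRefl)
    (hBsurj : Function.Surjective B) [Projective R (M ⧸ N)] :
    (N.orthogonalBilin B).orthogonalBilin B = N := by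
  conv_rhs => rw [← N.dualCoannihilator_dualAnnihilator_eq_of_projective]
  ext x
  simp only [mem_orthogonalBilin_iff, mem_dualCoannihilator, mem_dualAnnihilator,
    hBsurj.forall, hB.eq_iff]

theorem isTorsionFree_quotient_orthogonalBilin [IsDomain R] (hB : B.IsRefl) :
    IsTorsionFree R (M ⧸ N.orthogonalBilin B) := by
  rw [← N.ker_dualRestrict_comp_eq_orthogonalBilin hB]
  exact isTorsionFree_quotient_ker _

noncomputable def quotSupOrthogonalBilinEquiv (hB : B.IsRefl) (hBsurj : Function.Surjective B)
    [Projective R (M ⧸ N)] (BN : N →ₗ[R] N →ₗ[R] R) (hBN : ∀ x y : N, BN x y = B x y) :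
    (M ⧸ (N ⊔ N.orthogonalBilin B)) ≃ₗ[R] Dual R N ⧸ range BN :=
  have hrange : range BN = N.map (N.dualRestrict ∘ₗ B) := by
    have hcomp : BN = (N.dualRestrict ∘ₗ B) ∘ₗ N.subtype := by
      ext x y
      exact hBN x y
    rw [hcomp, range_comp, range_subtype]
  (quotEquivOfEq _ _ (by rw [N.ker_dualRestrict_comp_eq_orthogonalBilin hB])).trans
    (((N.dualRestrict ∘ₗ B).quotSupKerEquivOfSurjective
      (N.dualRestrict_surjective_of_projective.comp hBsurj) N).trans
      (quotEquivOfEq _ _ hrange.symm))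

end Submodule

theorem stmt4_general {M : Type*} [AddCommGroup M] [Module ℤ M]
    [Module.Finite ℤ M]
    (B : M →ₗ[ℤ] M →ₗ[ℤ] ℤ)
    (hsymm : ∀ x y, B x y = B y x)
    (hunimod : Function.Bijective B)
    (L : Submodule ℤ M)
    (BL : L →ₗ[ℤ] L →ₗ[ℤ] ℤ)
    (hBL : ∀ x y : L, BL x y = B x y)
    (htf : NoZeroSMulDivisors ℤ (M ⧸ L))
    (Lperp : Submodule ℤ M)
    (hLperp : ∀ x : M, x ∈ Lperp ↔ ∀ y ∈ L, B x y = 0)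
    (Bperp : Lperp →ₗ[ℤ] Lperp →ₗ[ℤ] ℤ)
    (hBperp : ∀ x y : Lperp, Bperp x y = B x y) :
    Nonempty ((Module.Dual ℤ L ⧸ LinearMap.range BL) ≃+
      (Module.Dual ℤ Lperp ⧸ LinearMap.range Bperp)) := by
  -- `BL`, `Bperp` and the duals carry the canonical `ℤ`-module structures of `L` and `Lperp`;
  -- they agree with the submodule structures once `M` itself has the canonical one.
  obtain rfl : ‹Module ℤ M› = AddCommGroup.toIntModule M := Subsingleton.elim _ _
  have hB : B.IsRefl := fun x y h => hsymm x y ▸ h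
  obtain rfl : Lperp = L.orthogonalBilin B := by
    ext x
    rw [hLperp, mem_orthogonalBilin_iff]
    exact forall₂_congr fun y _ => hB.eq_iff
  have := L.isTorsionFree_quotient_orthogonalBilin hB
  have hsup : L.orthogonalBilin B ⊔ (L.orthogonalBilin B).orthogonalBilin B =
      L ⊔ L.orthogonalBilin B := by
    rw [L.orthogonalBilin_orthogonalBilin_of_projective hB hunimod.2, sup_comm]
  exact ⟨((L.quotSupOrthogonalBilinEquiv hB hunimod.2 BL hBL).symm.trans
    ((quotEquivOfEq _ _ hsup.symm).trans
      ((L.orthogonalBilin B).quotSupOrthogonalBilinEquiv hB hunimod.2 Bperp hBperp))).toAddEquiv⟩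

/-- let `M` be a unimodular lattice, `L ⊆ M` a sublattice on which
the restricted form is nondegenerate, with `M/L` torsion-free, and let
`L⊥ = {x ∈ M | ⟨x,y⟩ = 0 ∀ y ∈ L}`.  Then `disc(L) ≅ disc(L⊥)` as abelian
groups. Sublattices are modelled as submodules carrying the restricted form. -/
theorem stmt4 {M : Type*} [AddCommGroup M] [Module ℤ M]
    [Module.Free ℤ M] [Module.Finite ℤ M]
    (B : M →ₗ[ℤ] M →ₗ[ℤ] ℤ)
    (hsymm : ∀ x y, B x y = B y x)
    (hunimod : Function.Bijective B)
    (L : Submodule ℤ M)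
    (BL : L →ₗ[ℤ] L →ₗ[ℤ] ℤ)
    (hBL : ∀ x y : L, BL x y = B x y)
    (hLnondeg : LinearMap.ker BL = ⊥)
    (htf : NoZeroSMulDivisors ℤ (M ⧸ L))
    (Lperp : Submodule ℤ M)
    (hLperp : ∀ x : M, x ∈ Lperp ↔ ∀ y ∈ L, B x y = 0)
    (Bperp : Lperp →ₗ[ℤ] Lperp →ₗ[ℤ] ℤ)
    (hBperp : ∀ x y : Lperp, Bperp x y = B x y) :
    Nonempty ((Module.Dual ℤ L ⧸ LinearMap.range BL) ≃+
      (Module.Dual ℤ Lperp ⧸ LinearMap.range Bperp)) :=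
  stmt4_general B hsymm hunimod L BL hBL htf Lperp hLperp Bperp hBperp
end

section
/- Let M be a unimodular lattice and L ⊆ M any sublattice on which the restricted form is nondegenerate. Then the discriminant group disc(L⊥) of the orthogonal complement L⊥ = {x ∈ M : ⟨x,y⟩ = 0 for all y ∈ L} is isomorphic to a subquotient of disc(L), i.e. it is isomorphic to a quotient of a subgroup of disc(L). -/
private lemma aux_proj {R M : Type*} [CommRing R] [IsDomain R] [IsPrincipalIdealRing R]
    [AddCommGroup M] [Module R M] [Module.Free R M] [Module.Finite R M]
    (P : Submodule R M) (hP : ∀ (c : R) (m : M), c ≠ 0 → c • m ∈ P → m ∈ P) :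
    ∃ π : M →ₗ[R] P, ∀ z : P, π (z : M) = z := by
  haveI : NoZeroSMulDivisors R (M ⧸ P) := by
    constructor
    intro c x hcx
    by_cases hc : c = 0
    · exact Or.inl hc
    · right
      obtain ⟨m, rfl⟩ := Submodule.Quotient.mk_surjective P x
      rw [← Submodule.Quotient.mk_smul, Submodule.Quotient.mk_eq_zero] at hcx
      rw [Submodule.Quotient.mk_eq_zero]
      exact hP c m hc hcx
  haveI : Module.Free R (M ⧸ P) := Module.free_of_finite_type_torsion_free'
  obtain ⟨s, hs⟩ := Module.projective_lifting_property P.mkQ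
    (LinearMap.id : M ⧸ P →ₗ[R] M ⧸ P) P.mkQ_surjective
  have hmem : ∀ x : M, x - s (P.mkQ x) ∈ P := by
    intro x
    have h2 : P.mkQ (s (P.mkQ x)) = P.mkQ x := by
      simpa using congrArg (fun f => f (P.mkQ x)) hs
    rw [← Submodule.Quotient.mk_eq_zero]
    show P.mkQ (x - s (P.mkQ x)) = 0
    rw [map_sub, h2, sub_self]
  refine ⟨(LinearMap.id - s ∘ₗ P.mkQ).codRestrict P hmem, ?_⟩
  intro z
  ext
  have h0 : P.mkQ (z : M) = 0 := by
    simp [Submodule.Quotient.mk_eq_zero, z.2]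
  show (z : M) - s (P.mkQ (z : M)) = (z : M)
  rw [h0, map_zero, sub_zero]

/-- Transport an additive hom to a `ℤ`-linear map for arbitrary `ℤ`-module instances. -/
private def intLinear {M N : Type*} [AddCommGroup M] [AddCommGroup N] [Module ℤ M]
    [Module ℤ N] (f : M →+ N) : M →ₗ[ℤ] N where
  toFun := f
  map_add' := f.map_add
  map_smul' := fun c x => by
    have := map_intCast_smul f ℤ ℤ c x
    simpa using this

/-- let `M` be a unimodular lattice and `L ⊆ M` a sublattice on
which the restricted form is nondegenerate.  Then `disc(L⊥)` is isomorphic to a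
subquotient of `disc(L)`, i.e. to a quotient of a subgroup of `disc(L)`. -/
theorem stmt5 {M : Type*} [AddCommGroup M] [Module ℤ M]
    [Module.Free ℤ M] [Module.Finite ℤ M]
    (B : M →ₗ[ℤ] M →ₗ[ℤ] ℤ)
    (hsymm : ∀ x y, B x y = B y x)
    (hunimod : Function.Bijective B)
    (L : Submodule ℤ M)
    (BL : L →ₗ[ℤ] L →ₗ[ℤ] ℤ)
    (hBL : ∀ x y : L, BL x y = B x y)
    (hLnondeg : LinearMap.ker BL = ⊥)
    (Lperp : Submodule ℤ M)
    (hLperp : ∀ x : M, x ∈ Lperp ↔ ∀ y ∈ L, B x y = 0)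
    (Bperp : Lperp →ₗ[ℤ] Lperp →ₗ[ℤ] ℤ)
    (hBperp : ∀ x y : Lperp, Bperp x y = B x y) :
    ∃ (H K : AddSubgroup (Module.Dual ℤ L ⧸ LinearMap.range BL)), K ≤ H ∧
      Nonempty ((Module.Dual ℤ Lperp ⧸ LinearMap.range Bperp) ≃+
        (H ⧸ K.addSubgroupOf H)) := by
  classical
  -- a retraction M → Lperp
  obtain ⟨π₀, hπ₀⟩ := aux_proj Lperp (by
    intro c m hc hcm
    rw [hLperp] at hcm ⊢
    intro y hy
    have h1 := hcm y hy
    rw [LinearMap.map_smul] at h1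
    simp only [LinearMap.smul_apply, smul_eq_mul] at h1
    exact (mul_eq_zero.mp h1).resolve_left hc)
  set π := intLinear (M := M) (N := Lperp) (AddMonoidHom.mk' (fun x => π₀ x) (map_add π₀)) with hπ
  have hπid : ∀ z : Lperp, π (z : M) = z := fun z => hπ₀ z
  -- the maps φ : M → Dual Lperp and ψ : M → Dual L
  set inclP := intLinear (M := Lperp) (N := M) (AddMonoidHom.mk' (fun y => (y : M)) (fun _ _ => rfl)) with hiP
  set inclL := intLinear (M := L) (N := M) (AddMonoidHom.mk' (fun y => (y : M)) (fun _ _ => rfl)) with hiL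
  set φ := (LinearMap.lcomp ℤ ℤ inclP).comp B with hφ
  set ψ := (LinearMap.lcomp ℤ ℤ inclL).comp B with hψ
  have hφapp : ∀ (x : M) (y : Lperp), φ x y = B x y := fun _ _ => rfl
  have hψapp : ∀ (x : M) (y : L), ψ x y = B x y := fun _ _ => rfl
  -- φ is surjective
  have hφsurj : Function.Surjective φ := by
    intro f
    obtain ⟨x, hx⟩ := hunimod.2 (f ∘ₗ π)
    refine ⟨x, LinearMap.ext fun y => ?_⟩
    rw [hφapp, hx]
    show f (π (y : M)) = f y
    rw [hπid y]
  set Φ := (LinearMap.range Bperp).mkQ ∘ₗ φ with hΦ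
  set Ψ := (LinearMap.range BL).mkQ ∘ₗ ψ with hΨ
  have hΦsurj : Function.Surjective Φ :=
    ((LinearMap.range Bperp).mkQ_surjective).comp hφsurj
  -- kernel inclusion
  have hkerΨ : LinearMap.ker Ψ ≤ LinearMap.ker Φ := by
    intro x hx
    have hx' : ψ x ∈ LinearMap.range BL := by
      rwa [LinearMap.mem_ker, hΨ, LinearMap.comp_apply, Submodule.mkQ_apply,
        Submodule.Quotient.mk_eq_zero] at hx
    obtain ⟨l, hl⟩ := hx'
    have hz : x - (l : M) ∈ Lperp := by
      rw [hLperp]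
      intro y hy
      have h1 : BL l ⟨y, hy⟩ = ψ x ⟨y, hy⟩ := by rw [hl]
      rw [hBL, hψapp] at h1
      have h2 : B (l : M) y = B x y := h1
      simp only [map_sub, LinearMap.sub_apply]
      rw [h2, sub_self]
    rw [LinearMap.mem_ker, hΦ, LinearMap.comp_apply, Submodule.mkQ_apply,
      Submodule.Quotient.mk_eq_zero]
    refine ⟨⟨x - (l : M), hz⟩, LinearMap.ext fun w => ?_⟩
    rw [hBperp, hφapp]
    have hlw : B (l : M) (w : M) = 0 := by
      rw [hsymm]
      exact (hLperp w).mp w.2 l l.2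
    show B (x - (l : M)) (w : M) = B x w
    simp only [map_sub, LinearMap.sub_apply, hlw, sub_zero]
  -- the subquotient
  set H := LinearMap.range Ψ with hH
  set Kmod := Submodule.map Ψ (LinearMap.ker Φ) with hK
  have hKH : Kmod ≤ H := by
    rintro _ ⟨x, -, rfl⟩; exact ⟨x, rfl⟩
  set K' := Kmod.comap H.subtype with hK'
  set Θ := K'.mkQ ∘ₗ Ψ.rangeRestrict with hΘ
  have hΘsurj : Function.Surjective Θ :=
    K'.mkQ_surjective.comp Ψ.surjective_rangeRestrict
  have hΘker : LinearMap.ker Θ = LinearMap.ker Φ := by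
    ext x
    rw [LinearMap.mem_ker, hΘ, LinearMap.comp_apply, Submodule.mkQ_apply,
      Submodule.Quotient.mk_eq_zero]
    constructor
    · intro hx
      have hmem : Ψ x ∈ Kmod := hx
      obtain ⟨y, hy, hyx⟩ := hmem
      have hker : x - y ∈ LinearMap.ker Ψ := by
        rw [LinearMap.mem_ker, map_sub, hyx, sub_self]
      have hxy : x - y ∈ LinearMap.ker Φ := hkerΨ hker
      have := add_mem hxy hy
      simpa using this
    · intro hx
      exact ⟨x, hx, rfl⟩
  -- assemble the linear equivalence
  have e :=
    (Φ.quotKerEquivOfSurjective hΦsurj).symm.trans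
      ((Submodule.quotEquivOfEq _ _ hΘker.symm).trans
        (Θ.quotKerEquivOfSurjective hΘsurj))
  refine ⟨H.toAddSubgroup, Kmod.toAddSubgroup, hKH, ⟨e.toAddEquiv.trans ?_⟩⟩
  exact { Equiv.refl _ with map_add' := fun _ _ => rfl }
end

section
/- Let A be a nodal real line arrangement with a nonempty set of bounded chambers. Then there exists an enumeration C₁, …, C_m of the bounded chambers such that for every k with 2 ≤ k ≤ m, the intersection C_k ∩ (C₁ ∪ ⋯ ∪ C_{k-1}) is a proper subset of the topological boundary ∂C_k of C_k. -/
/-- A (real affine) line in the plane. -/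
def IsAffLine (L : Set (ℝ × ℝ)) : Prop :=
  ∃ a b c : ℝ, (a, b) ≠ (0, 0) ∧ L = {p : ℝ × ℝ | a * p.1 + b * p.2 = c}

/-- The set of bounded chambers of a line arrangement: closures of the bounded
connected components of the complement of the union of the lines. -/
def boundedChambers (A : Finset (Set (ℝ × ℝ))) : Set (Set (ℝ × ℝ)) :=
  {C | (∃ x ∈ (⋃ L ∈ A, L)ᶜ,
        C = closure (connectedComponentIn (⋃ L ∈ A, L)ᶜ x) ∧
        Bornology.IsBounded (connectedComponentIn (⋃ L ∈ A, L)ᶜ x))}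
namespace Stmt17Aux
noncomputable section
open Set Bornology

abbrev Pt := ℝ × ℝ

def dot (u v : Pt) : ℝ := u.1 * v.1 + u.2 * v.2

lemma small_nonpos {a b : ℝ} (h : ∀ δ : ℝ, 0 < δ → δ ≤ 1 → a + δ * b ≤ 0) : a ≤ 0 := by
  by_contra h'
  push_neg at h'
  have hb : (0:ℝ) ≤ |b| := abs_nonneg b
  set δ := min 1 (a / (2 * (|b| + 1))) with hδdef
  have hδpos : 0 < δ := lt_min one_pos (by positivity)
  have hδ1 : δ ≤ 1 := min_le_left _ _
  have hδ2 : δ * (2 * (|b| + 1)) ≤ a := by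
    have := min_le_right 1 (a / (2 * (|b| + 1)))
    rw [le_div_iff₀ (by positivity)] at this
    linarith
  have h1 := h δ hδpos hδ1
  have hδb : -(δ * |b|) ≤ δ * b := by nlinarith [neg_abs_le b]
  nlinarith

lemma exists_solve {n1 n2 : Pt} (hD : n1.1 * n2.2 - n1.2 * n2.1 ≠ 0) (t1 t2 : ℝ) :
    ∃ u : Pt, dot n1 u = t1 ∧ dot n2 u = t2 := by
  set D := n1.1 * n2.2 - n1.2 * n2.1 with hDdef
  refine ⟨((t1 * n2.2 - t2 * n1.2) / D, (t2 * n1.1 - t1 * n2.1) / D), ?_, ?_⟩ <;>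
  · simp only [dot]
    field_simp
    ring

lemma exists_decomp {n1 n2 : Pt} (w : Pt) (hD : n1.1 * n2.2 - n1.2 * n2.1 ≠ 0) :
    ∃ α β : ℝ, ∀ q : Pt, dot w q = α * dot n1 q + β * dot n2 q := by
  set D := n1.1 * n2.2 - n1.2 * n2.1 with hDdef
  refine ⟨(w.1 * n2.2 - w.2 * n2.1) / D, (n1.1 * w.2 - n1.2 * w.1) / D, fun q => ?_⟩
  simp only [dot]
  field_simp
  ring

lemma cone1 {m w : Pt} (hw : w.1 * m.2 - w.2 * m.1 ≠ 0) {ε : ℝ} (hε : 0 < ε)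
    (hmax : ∀ q : Pt, ‖q‖ < ε → 0 < dot m q → dot w q ≤ 0) : False := by
  have hm0 : m.1 ≠ 0 ∨ m.2 ≠ 0 := by
    by_contra hc
    push_neg at hc
    rw [hc.1, hc.2] at hw
    simp at hw
  have hm : 0 < dot m m := by
    simp only [dot]
    rcases hm0 with h | h
    · nlinarith [mul_self_pos.mpr h, mul_self_nonneg m.2]
    · nlinarith [mul_self_pos.mpr h, mul_self_nonneg m.1]
  set d : Pt := (m.2, -m.1) with hd
  set e : ℝ := w.1 * m.2 - w.2 * m.1 with he
  set τ : ℝ := ε / (2 * (|e| * ‖d‖ + ‖m‖ + 1)) with hτ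
  have hnd : (0:ℝ) ≤ ‖d‖ := norm_nonneg d
  have hnm : (0:ℝ) ≤ ‖m‖ := norm_nonneg m
  have habs : (0:ℝ) ≤ |e| := abs_nonneg e
  have hτpos : 0 < τ := by positivity
  have key : ∀ δ : ℝ, 0 < δ → δ ≤ 1 → e ^ 2 + δ * dot w m ≤ 0 := by
    intro δ hδ hδ1
    set q : Pt := (τ * e) • d + (δ * τ) • m with hq
    have hnq : ‖q‖ < ε := by
      have h1 : ‖q‖ ≤ |τ| * |e| * ‖d‖ + |δ| * |τ| * ‖m‖ := by
        calc ‖q‖ ≤ ‖(τ * e) • d‖ + ‖(δ * τ) • m‖ := norm_add_le _ _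
        _ = |τ| * |e| * ‖d‖ + |δ| * |τ| * ‖m‖ := by
            rw [norm_smul, norm_smul]
            simp [Real.norm_eq_abs, abs_mul]
      rw [abs_of_pos hτpos, abs_of_pos hδ] at h1
      have h4 : τ * (|e| * ‖d‖ + ‖m‖ + 1) = ε / 2 := by
        rw [hτ]; field_simp
      nlinarith [mul_nonneg (mul_nonneg (sub_nonneg.mpr hδ1) hτpos.le) hnm]
    have hdq : dot m q = δ * τ * dot m m := by
      simp only [hq, dot, hd, Prod.smul_def, smul_eq_mul, Prod.fst_add, Prod.snd_add,
        Prod.fst, Prod.snd]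
      ring
    have hmq : 0 < dot m q := by rw [hdq]; positivity
    have hwq : dot w q = τ * e ^ 2 + δ * τ * dot w m := by
      simp only [hq, dot, hd, he, Prod.smul_def, smul_eq_mul, Prod.fst_add, Prod.snd_add]
      ring
    have := hmax q hnq hmq
    rw [hwq] at this
    nlinarith
  have h0 := small_nonpos key
  have : e = 0 := by nlinarith [sq_nonneg e]
  exact hw this

lemma dot_smul_right (m u : Pt) (t : ℝ) : dot m (t • u) = t * dot m u := by
  simp only [dot, Prod.smul_def, smul_eq_mul]; ring

/-- From the max condition on the sector `{m1 ⬝ q > 0, m2 ⬝ q > 0}` near `v`,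
the coefficients of `w` in the basis `m1, m2` are negative. -/
lemma coef_neg {m1 m2 w : Pt} (hD : m1.1 * m2.2 - m1.2 * m2.1 ≠ 0)
    (hw1 : w.1 * m1.2 - w.2 * m1.1 ≠ 0) (hw2 : w.1 * m2.2 - w.2 * m2.1 ≠ 0)
    {α β : ℝ} (hdec : ∀ q : Pt, dot w q = α * dot m1 q + β * dot m2 q)
    {ε : ℝ} (hε : 0 < ε)
    (hmax : ∀ q : Pt, ‖q‖ < ε → 0 < dot m1 q → 0 < dot m2 q → dot w q ≤ 0) :
    α < 0 ∧ β < 0 := by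
  have key : ∀ t1 t2 : ℝ, 0 < t1 → 0 < t2 → α * t1 + β * t2 ≤ 0 := by
    intro t1 t2 ht1 ht2
    obtain ⟨u, hu1, hu2⟩ := exists_solve hD t1 t2
    set t : ℝ := ε / (2 * (‖u‖ + 1)) with ht
    have htpos : 0 < t := by positivity
    have hnu : (0:ℝ) ≤ ‖u‖ := norm_nonneg u
    have hq : ‖t • u‖ < ε := by
      rw [norm_smul, Real.norm_eq_abs, abs_of_pos htpos]
      have : t * (‖u‖ + 1) = ε / 2 := by rw [ht]; field_simp
      nlinarith
    have h1 : 0 < dot m1 (t • u) := by rw [dot_smul_right, hu1]; positivity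
    have h2 : 0 < dot m2 (t • u) := by rw [dot_smul_right, hu2]; positivity
    have := hmax _ hq h1 h2
    rw [hdec, dot_smul_right, dot_smul_right, hu1, hu2] at this
    nlinarith
  have hα : α ≤ 0 := by
    apply small_nonpos (b := β)
    intro δ hδ hδ1
    have := key 1 δ one_pos hδ
    linarith [this]
  have hβ : β ≤ 0 := by
    apply small_nonpos (b := α)
    intro δ hδ hδ1
    have := key δ 1 hδ one_pos
    linarith [this]
  constructor
  · rcases lt_or_eq_of_le hα with h | h
    · exact h
    · exfalso
      apply hw2
      have := hdec (m2.2, -m2.1)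
      simp only [dot] at this
      rw [h] at this
      linear_combination this
  · rcases lt_or_eq_of_le hβ with h | h
    · exact h
    · exfalso
      apply hw1
      have := hdec (m1.2, -m1.1)
      simp only [dot] at this
      rw [h] at this
      linear_combination this

/-- Given negative coefficients, find an ascent direction in any other sector. -/
lemma exists_ascent {m1 m2 w : Pt} (hD : m1.1 * m2.2 - m1.2 * m2.1 ≠ 0)
    {α β : ℝ} (hdec : ∀ q : Pt, dot w q = α * dot m1 q + β * dot m2 q)
    (hα : α < 0) (hβ : β < 0) {r1 r2 : ℝ} (hr1 : r1 ≠ 0) (hr2 : r2 ≠ 0)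
    (hr : r1 < 0 ∨ r2 < 0) {δ : ℝ} (hδ : 0 < δ) :
    ∃ q : Pt, ‖q‖ < δ ∧ 0 < dot m1 q * r1 ∧ 0 < dot m2 q * r2 ∧ 0 < dot w q := by
  -- choose target values t1 t2 with t1 * r1 > 0, t2 * r2 > 0, α t1 + β t2 > 0
  obtain ⟨t1, t2, h1, h2, h3⟩ :
      ∃ t1 t2 : ℝ, 0 < t1 * r1 ∧ 0 < t2 * r2 ∧ 0 < α * t1 + β * t2 := by
    rcases lt_or_gt_of_ne hr1 with hr1' | hr1' <;>
      rcases lt_or_gt_of_ne hr2 with hr2' | hr2'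
    · exact ⟨-1, -1, by nlinarith, by nlinarith, by nlinarith⟩
    · have hβ0 : β ≠ 0 := ne_of_lt hβ
      have hpos : 0 < (-α) / (2 * (-β)) := div_pos (by linarith) (by linarith)
      refine ⟨-1, (-α) / (2 * (-β)), by nlinarith, by nlinarith, ?_⟩
      have heq : β * ((-α) / (2 * (-β))) = α / 2 := by
        field_simp
      rw [heq]; linarith
    · have hα0 : α ≠ 0 := ne_of_lt hα
      have hpos : 0 < (-β) / (2 * (-α)) := div_pos (by linarith) (by linarith)
      refine ⟨(-β) / (2 * (-α)), -1, by nlinarith, by nlinarith, ?_⟩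
      have heq : α * ((-β) / (2 * (-α))) = β / 2 := by
        field_simp
      rw [heq]; linarith
    · rcases hr with h | h <;> linarith
  obtain ⟨u, hu1, hu2⟩ := exists_solve hD t1 t2
  set t : ℝ := δ / (2 * (‖u‖ + 1)) with ht
  have htpos : 0 < t := by positivity
  have hnu : (0:ℝ) ≤ ‖u‖ := norm_nonneg u
  refine ⟨t • u, ?_, ?_, ?_, ?_⟩
  · rw [norm_smul, Real.norm_eq_abs, abs_of_pos htpos]
    have : t * (‖u‖ + 1) = δ / 2 := by rw [ht]; field_simp
    nlinarith
  · rw [dot_smul_right, hu1]; nlinarith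
  · rw [dot_smul_right, hu2]; nlinarith
  · rw [hdec, dot_smul_right, dot_smul_right, hu1, hu2]; nlinarith



variable (a b c : Set Pt → ℝ)

def fl (L : Set Pt) (p : Pt) : ℝ := a L * p.1 + b L * p.2 - c L

variable (A : Finset (Set Pt))

def Uc : Set Pt := (⋃ L ∈ A, L)ᶜ

def cS (x : Pt) : Set Pt := {p | ∀ L ∈ A, 0 < fl a b c L p * fl a b c L x}

variable {a b c A}

/-- The coefficient hypothesis. -/
def Hco (a b c : Set Pt → ℝ) (A : Finset (Set Pt)) : Prop :=
  ∀ L ∈ A, ((a L, b L) ≠ ((0:ℝ), (0:ℝ))) ∧ L = {p : Pt | a L * p.1 + b L * p.2 = c L}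

lemma sign_trans {p x y : ℝ} (h1 : 0 < p * x) (h2 : 0 < p * y) : 0 < x * y := by
  have hp : p ≠ 0 := by rintro rfl; simp at h1
  have hp2 : 0 < p * p := mul_self_pos.mpr hp
  nlinarith [mul_pos h1 h2]

lemma cont_fl (L : Set Pt) : Continuous (fl a b c L) := by
  unfold fl; fun_prop

lemma mem_line_iff (hco : Hco a b c A) {L : Set Pt} (hL : L ∈ A) {p : Pt} :
    p ∈ L ↔ fl a b c L p = 0 := by
  conv_lhs => rw [(hco L hL).2]
  simp only [mem_setOf_eq, fl]
  constructor <;> intro h <;> linarith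

lemma mem_Uc_iff (hco : Hco a b c A) {p : Pt} :
    p ∈ Uc A ↔ ∀ L ∈ A, fl a b c L p ≠ 0 := by
  simp only [Uc, mem_compl_iff, mem_iUnion, not_exists]
  constructor
  · intro h L hL
    intro h0
    exact h L hL ((mem_line_iff hco hL).mpr h0)
  · intro h L hL hpL
    exact h L hL ((mem_line_iff hco hL).mp hpL)

lemma isOpen_cS (x : Pt) : IsOpen (cS a b c A x) := by
  have : cS a b c A x = ⋂ L ∈ A, {p : Pt | 0 < fl a b c L p * fl a b c L x} := by
    ext p; simp [cS]
  rw [this]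
  exact (A.finite_toSet).isOpen_biInter fun L _ =>
    isOpen_lt continuous_const ((cont_fl L).mul continuous_const)

lemma convex_cS (x : Pt) : Convex ℝ (cS a b c A x) := by
  have : cS a b c A x = ⋂ L ∈ A, {p : Pt | 0 < fl a b c L p * fl a b c L x} := by
    ext p; simp [cS]
  rw [this]
  apply convex_iInter₂
  intro L _
  have hlin : IsLinearMap ℝ (fun p : Pt => a L * p.1 + b L * p.2) := by
    constructor
    · intro p q; simp [Prod.fst_add, Prod.snd_add]; ring
    · intro t p; simp [Prod.smul_def, smul_eq_mul]; ring
  rcases lt_trichotomy (fl a b c L x) 0 with h | h | h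
  · have : {p : Pt | 0 < fl a b c L p * fl a b c L x} =
        {p : Pt | a L * p.1 + b L * p.2 < c L} := by
      ext p
      simp only [mem_setOf_eq, fl]
      constructor <;> intro h'
      · rcases mul_pos_iff.mp h' with ⟨h1, h2⟩ | ⟨h1, h2⟩ <;> simp only [fl] at h <;> linarith
      · apply mul_pos_of_neg_of_neg <;> simp only [fl] at h ⊢ <;> linarith
    rw [this]
    exact convex_halfSpace_lt hlin _
  · have : {p : Pt | 0 < fl a b c L p * fl a b c L x} = ∅ := by
      ext p; simp [h]
    rw [this]; exact convex_empty
  · have : {p : Pt | 0 < fl a b c L p * fl a b c L x} =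
        {p : Pt | c L < a L * p.1 + b L * p.2} := by
      ext p
      simp only [mem_setOf_eq, fl]
      constructor <;> intro h'
      · rcases mul_pos_iff.mp h' with ⟨h1, h2⟩ | ⟨h1, h2⟩ <;> simp only [fl] at h <;> linarith
      · apply mul_pos <;> simp only [fl] at h ⊢ <;> linarith
    rw [this]
    exact convex_halfSpace_gt hlin _

lemma cS_subset_Uc (hco : Hco a b c A) (x : Pt) : cS a b c A x ⊆ Uc A := by
  intro p hp
  rw [mem_Uc_iff hco]
  intro L hL h0
  have := hp L hL
  rw [h0] at this
  simp at this

lemma mem_cS_self (hco : Hco a b c A) {x : Pt} (hx : x ∈ Uc A) : x ∈ cS a b c A x := by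
  intro L hL
  exact mul_self_pos.mpr ((mem_Uc_iff hco).mp hx L hL)

lemma comp_eq_cS (hco : Hco a b c A) {x : Pt} (hx : x ∈ Uc A) :
    connectedComponentIn (Uc A) x = cS a b c A x := by
  apply le_antisymm
  · intro p hp
    intro L hL
    rcases lt_or_ge 0 (fl a b c L p * fl a b c L x) with h | h
    · exact h
    · exfalso
      have hpre : IsPreconnected (connectedComponentIn (Uc A) x) :=
        isPreconnected_connectedComponentIn
      have himg : IsPreconnected (fl a b c L '' connectedComponentIn (Uc A) x) :=
        hpre.image _ ((cont_fl L).continuousOn)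
      have hord := himg.ordConnected
      have hxmem : x ∈ connectedComponentIn (Uc A) x := mem_connectedComponentIn hx
      have hfp : fl a b c L p ∈ fl a b c L '' connectedComponentIn (Uc A) x :=
        ⟨p, hp, rfl⟩
      have hfx : fl a b c L x ∈ fl a b c L '' connectedComponentIn (Uc A) x :=
        ⟨x, hxmem, rfl⟩
      have hpn : fl a b c L p ≠ 0 := by
        have := connectedComponentIn_subset (Uc A) x hp
        exact (mem_Uc_iff hco).mp this L hL
      have hxn : fl a b c L x ≠ 0 := (mem_Uc_iff hco).mp hx L hL
      have h0 : (0:ℝ) ∈ fl a b c L '' connectedComponentIn (Uc A) x := by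
        rcases lt_or_gt_of_ne hpn with hp' | hp'
        · rcases lt_or_gt_of_ne hxn with hx' | hx'
          · nlinarith
          · exact hord.out hfp hfx ⟨hp'.le, hx'.le⟩
        · rcases lt_or_gt_of_ne hxn with hx' | hx'
          · exact hord.out hfx hfp ⟨hx'.le, hp'.le⟩
          · nlinarith
      obtain ⟨q, hq, hq0⟩ := h0
      have := connectedComponentIn_subset (Uc A) x hq
      exact (mem_Uc_iff hco).mp this L hL hq0
  · exact ((convex_cS x).isPreconnected).subset_connectedComponentIn
      (mem_cS_self hco hx) (cS_subset_Uc hco x)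

lemma cS_eq_of_mem {x y p : Pt} (hpx : p ∈ cS a b c A x) (hpy : p ∈ cS a b c A y) :
    cS a b c A x = cS a b c A y := by
  have hsign : ∀ L ∈ A, 0 < fl a b c L x * fl a b c L y := by
    intro L hL
    exact sign_trans (hpx L hL) (hpy L hL)
  ext q
  constructor <;> intro hq L hL
  · exact sign_trans (mul_comm (fl a b c L q) (fl a b c L x) ▸ hq L hL) (hsign L hL)
  · have h1 := hq L hL
    have h2 := hsign L hL
    have := sign_trans (mul_comm (fl a b c L q) (fl a b c L y) ▸ h1)
      (mul_comm (fl a b c L x) (fl a b c L y) ▸ h2)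
    linarith [this]

lemma mem_cS_of_mem_closure (hco : Hco a b c A) {x y : Pt}
    (hy : y ∈ closure (cS a b c A x)) (hyU : y ∈ Uc A) : y ∈ cS a b c A x := by
  have hyS : y ∈ cS a b c A y := mem_cS_self hco hyU
  obtain ⟨p, hp1, hp2⟩ := mem_closure_iff.mp hy (cS a b c A y) (isOpen_cS y) hyS
  rw [cS_eq_of_mem hp2 hp1]
  exact hyS

lemma closure_sign {x : Pt} {L : Set Pt} (hL : L ∈ A) {y : Pt}
    (hy : y ∈ closure (cS a b c A x)) : 0 ≤ fl a b c L y * fl a b c L x := by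
  have hsub : cS a b c A x ⊆ {p : Pt | 0 ≤ fl a b c L p * fl a b c L x} :=
    fun p hp => (hp L hL).le
  have hcl : IsClosed {p : Pt | 0 ≤ fl a b c L p * fl a b c L x} :=
    isClosed_le continuous_const ((cont_fl L).mul continuous_const)
  exact (closure_minimal hsub hcl) hy



variable {a b c : Set Pt → ℝ} {A : Finset (Set Pt)}

lemma dot_smul_left (m u : Pt) (t : ℝ) : dot (t • m) u = t * dot m u := by
  simp only [dot, Prod.smul_def, smul_eq_mul]; ring

lemma dot_add_right (w u q : Pt) : dot w (u + q) = dot w u + dot w q := by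
  simp only [dot, Prod.fst_add, Prod.snd_add]; ring

lemma cS_eq_of_signs {x y : Pt} (hsign : ∀ L ∈ A, 0 < fl a b c L x * fl a b c L y) :
    cS a b c A x = cS a b c A y := by
  ext q
  constructor <;> intro hq L hL
  · exact sign_trans (mul_comm (fl a b c L q) (fl a b c L x) ▸ hq L hL) (hsign L hL)
  · have h1 := hq L hL
    have h2 := hsign L hL
    have := sign_trans (mul_comm (fl a b c L q) (fl a b c L y) ▸ h1)
      (mul_comm (fl a b c L x) (fl a b c L y) ▸ h2)
    linarith [this]

lemma lines_indep (hco : Hco a b c A) {L1 L2 : Set Pt} (h1 : L1 ∈ A) (h2 : L2 ∈ A)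
    (hne : L1 ≠ L2) {v : Pt} (hv1 : fl a b c L1 v = 0) (hv2 : fl a b c L2 v = 0) :
    a L1 * b L2 - a L2 * b L1 ≠ 0 := by
  intro hD
  apply hne
  obtain ⟨hn1, hL1⟩ := hco L1 h1
  obtain ⟨hn2, hL2⟩ := hco L2 h2
  have hn1' : a L1 ≠ 0 ∨ b L1 ≠ 0 := by
    by_contra hcon; push_neg at hcon
    exact hn1 (by rw [hcon.1, hcon.2])
  have hn2' : a L2 ≠ 0 ∨ b L2 ≠ 0 := by
    by_contra hcon; push_neg at hcon
    exact hn2 (by rw [hcon.1, hcon.2])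
  set k := a L1 ^ 2 + b L1 ^ 2 with hk
  have hkpos : 0 < k := by
    rcases hn1' with h | h <;> nlinarith [mul_self_pos.mpr h, sq_nonneg (a L1), sq_nonneg (b L1)]
  set t := a L1 * a L2 + b L1 * b L2 with ht
  have ha2 : a L2 * k = t * a L1 := by linear_combination (-(b L1)) * hD
  have hb2 : b L2 * k = t * b L1 := by linear_combination (a L1) * hD
  have e1 : c L1 = a L1 * v.1 + b L1 * v.2 := by simp only [fl] at hv1; linarith
  have e2 : c L2 = a L2 * v.1 + b L2 * v.2 := by simp only [fl] at hv2; linarith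
  have hc2 : c L2 * k = t * c L1 := by
    rw [e1, e2]; linear_combination v.1 * ha2 + v.2 * hb2
  have htne : t ≠ 0 := by
    intro ht0
    have hA0 : a L2 * k = 0 := by rw [ha2, ht0]; ring
    have hB0 : b L2 * k = 0 := by rw [hb2, ht0]; ring
    have ha20 : a L2 = 0 := (mul_eq_zero.mp hA0).resolve_right hkpos.ne'
    have hb20 : b L2 = 0 := (mul_eq_zero.mp hB0).resolve_right hkpos.ne'
    exact hn2 (by rw [ha20, hb20])
  have hid : ∀ p : Pt, (a L2 * p.1 + b L2 * p.2 - c L2) * k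
      = t * (a L1 * p.1 + b L1 * p.2 - c L1) := by
    intro p
    linear_combination p.1 * ha2 + p.2 * hb2 - hc2
  rw [hL1, hL2]
  ext p
  simp only [mem_setOf_eq]
  constructor
  · intro hp
    have hexpr : a L1 * p.1 + b L1 * p.2 - c L1 = 0 := by linarith
    have h0 : (a L2 * p.1 + b L2 * p.2 - c L2) * k = 0 := by rw [hid p, hexpr]; ring
    have := (mul_eq_zero.mp h0).resolve_right hkpos.ne'
    linarith
  · intro hp
    have hexpr : a L2 * p.1 + b L2 * p.2 - c L2 = 0 := by linarith
    have h0 : t * (a L1 * p.1 + b L1 * p.2 - c L1) = 0 := by rw [← hid p, hexpr]; ring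
    have := (mul_eq_zero.mp h0).resolve_left htne
    linarith

lemma key_ascent (hco : Hco a b c A)
    (hnodal : ∀ L₁ ∈ A, ∀ L₂ ∈ A, ∀ L₃ ∈ A,
      L₁ ≠ L₂ → L₁ ≠ L₃ → L₂ ≠ L₃ → L₁ ∩ L₂ ∩ L₃ = ∅)
    {w : Pt} (hw : ∀ L ∈ A, w.1 * b L - w.2 * a L ≠ 0)
    {x y v : Pt} (hx : x ∈ Uc A) (hy : y ∈ Uc A)
    (hvx : v ∈ closure (cS a b c A x)) (hvy : v ∈ closure (cS a b c A y))
    (hmax : ∀ p ∈ closure (cS a b c A x), dot w p ≤ dot w v)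
    (hne : cS a b c A x ≠ cS a b c A y) :
    ∃ p ∈ cS a b c A y, dot w v < dot w p := by
  classical
  set T := A.filter (fun L => fl a b c L v = 0) with hT
  have hTsub : ∀ L ∈ T, L ∈ A ∧ fl a b c L v = 0 := fun L hL => Finset.mem_filter.mp hL
  have hoff : ∀ L ∈ A, L ∉ T →
      0 < fl a b c L v * fl a b c L x ∧ 0 < fl a b c L v * fl a b c L y := by
    intro L hL hLT
    have hvne : fl a b c L v ≠ 0 := fun h0 => hLT (Finset.mem_filter.mpr ⟨hL, h0⟩)
    have h1 := closure_sign hL hvx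
    have h2 := closure_sign hL hvy
    have hx0 : fl a b c L x ≠ 0 := (mem_Uc_iff hco).mp hx L hL
    have hy0 : fl a b c L y ≠ 0 := (mem_Uc_iff hco).mp hy L hL
    constructor
    · rcases h1.lt_or_eq with h | h
      · exact h
      · exact absurd h.symm (mul_ne_zero hvne hx0)
    · rcases h2.lt_or_eq with h | h
      · exact h
      · exact absurd h.symm (mul_ne_zero hvne hy0)
  have hsx : ∀ L ∈ A, L ∉ T → 0 < fl a b c L v * fl a b c L x := fun L hL h => (hoff L hL h).1
  have hsy : ∀ L ∈ A, L ∉ T → 0 < fl a b c L v * fl a b c L y := fun L hL h => (hoff L hL h).2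
  have hTne : T.Nonempty := by
    rw [Finset.nonempty_iff_ne_empty]
    intro hTe
    have hvU : v ∈ Uc A := by
      rw [mem_Uc_iff hco]
      intro L hL h0
      have hmem : L ∈ T := Finset.mem_filter.mpr ⟨hL, h0⟩
      rw [hTe] at hmem
      simp at hmem
    exact hne (cS_eq_of_mem (mem_cS_of_mem_closure hco hvx hvU)
      (mem_cS_of_mem_closure hco hvy hvU))
  have hTcard : T.card ≤ 2 := by
    by_contra hc
    push_neg at hc
    obtain ⟨L1, h1, L2, h2, L3, h3, h12, h13, h23⟩ := Finset.two_lt_card.mp hc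
    have hA1 := (hTsub L1 h1).1
    have hA2 := (hTsub L2 h2).1
    have hA3 := (hTsub L3 h3).1
    have hv1 : v ∈ L1 := (mem_line_iff hco hA1).mpr (hTsub L1 h1).2
    have hv2 : v ∈ L2 := (mem_line_iff hco hA2).mpr (hTsub L2 h2).2
    have hv3 : v ∈ L3 := (mem_line_iff hco hA3).mpr (hTsub L3 h3).2
    have hempty := hnodal L1 hA1 L2 hA2 L3 hA3 h12 h13 h23
    have : v ∈ L1 ∩ L2 ∩ L3 := ⟨⟨hv1, hv2⟩, hv3⟩
    rw [hempty] at this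
    exact this
  -- the epsilon ball on which the off-lines keep their sign
  have hWopen : IsOpen (⋂ L ∈ (A \ T), {p : Pt | 0 < fl a b c L p * fl a b c L v}) :=
    ((A \ T).finite_toSet).isOpen_biInter fun L _ =>
      isOpen_lt continuous_const ((cont_fl L).mul continuous_const)
  have hvW : v ∈ ⋂ L ∈ (A \ T), {p : Pt | 0 < fl a b c L p * fl a b c L v} := by
    apply mem_iInter₂.mpr
    intro L hL
    obtain ⟨hLA, hLT⟩ := Finset.mem_sdiff.mp hL
    exact mul_self_pos.mpr (fun h0 => hLT (Finset.mem_filter.mpr ⟨hLA, h0⟩))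
  obtain ⟨ε, hε, hball⟩ := Metric.isOpen_iff.mp hWopen v hvW
  -- local inclusion into a sector through v
  have hloc : ∀ z : Pt, z ∈ Uc A → (∀ L ∈ A, L ∉ T → 0 < fl a b c L v * fl a b c L z) →
      ∀ q : Pt, ‖q‖ < ε → (∀ L ∈ T, 0 < fl a b c L (v + q) * fl a b c L z) →
      v + q ∈ cS a b c A z := by
    intro z _ hsz q hq hTq L hL
    by_cases hLT : L ∈ T
    · exact hTq L hLT
    · have hmem : v + q ∈ Metric.ball v ε := by
        rw [Metric.mem_ball, dist_eq_norm, add_sub_cancel_left]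
        exact hq
      have hWq := hball hmem
      have h1 : 0 < fl a b c L (v + q) * fl a b c L v :=
        mem_iInter₂.mp hWq L (Finset.mem_sdiff.mpr ⟨hL, hLT⟩)
      exact sign_trans (mul_comm (fl a b c L (v+q)) (fl a b c L v) ▸ h1) (hsz L hL hLT)
  have hfl_add : ∀ (L : Set Pt) (q : Pt),
      fl a b c L (v + q) = fl a b c L v + dot (a L, b L) q := by
    intro L q
    simp only [fl, dot, Prod.fst_add, Prod.snd_add]
    ring
  have hcard : T.card = 1 ∨ T.card = 2 := by
    have := Finset.Nonempty.card_pos hTne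
    omega
  rcases hcard with hcard | hcard
  · -- one line through v : impossible for a maximizer
    exfalso
    obtain ⟨L1, hTeq⟩ := Finset.card_eq_one.mp hcard
    have hL1T : L1 ∈ T := by rw [hTeq]; simp
    have hA1 := (hTsub L1 hL1T).1
    have hv1 := (hTsub L1 hL1T).2
    have hs1 : fl a b c L1 x ≠ 0 := (mem_Uc_iff hco).mp hx L1 hA1
    set m : Pt := (fl a b c L1 x) • (a L1, b L1) with hm
    have hwm : w.1 * m.2 - w.2 * m.1 ≠ 0 := by
      have : w.1 * m.2 - w.2 * m.1 = fl a b c L1 x * (w.1 * b L1 - w.2 * a L1) := by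
        simp only [hm, Prod.smul_def, smul_eq_mul]
        ring
      rw [this]
      exact mul_ne_zero hs1 (hw L1 hA1)
    apply cone1 hwm hε
    intro q hq hmq
    have hq1 : 0 < fl a b c L1 (v + q) * fl a b c L1 x := by
      rw [hfl_add, hv1, zero_add]
      rw [hm, dot_smul_left] at hmq
      linarith [mul_comm (fl a b c L1 x) (dot (a L1, b L1) q) ▸ hmq]
    have hmemx : v + q ∈ cS a b c A x := by
      apply hloc x hx hsx q hq
      intro L hLT
      have : L = L1 := by
        have := hTeq ▸ hLT
        simpa using this
      rw [this]
      exact hq1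
    have := hmax _ (subset_closure hmemx)
    rw [dot_add_right] at this
    linarith
  · -- exactly two lines through v
    obtain ⟨L1, L2, h12, hTeq⟩ := Finset.card_eq_two.mp hcard
    have hL1T : L1 ∈ T := by rw [hTeq]; simp
    have hL2T : L2 ∈ T := by rw [hTeq]; simp
    have hA1 := (hTsub L1 hL1T).1
    have hA2 := (hTsub L2 hL2T).1
    have hv1 := (hTsub L1 hL1T).2
    have hv2 := (hTsub L2 hL2T).2
    have hs1 : fl a b c L1 x ≠ 0 := (mem_Uc_iff hco).mp hx L1 hA1
    have hs2 : fl a b c L2 x ≠ 0 := (mem_Uc_iff hco).mp hx L2 hA2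
    have hs1y : fl a b c L1 y ≠ 0 := (mem_Uc_iff hco).mp hy L1 hA1
    have hs2y : fl a b c L2 y ≠ 0 := (mem_Uc_iff hco).mp hy L2 hA2
    set m1 : Pt := (fl a b c L1 x) • (a L1, b L1) with hm1
    set m2 : Pt := (fl a b c L2 x) • (a L2, b L2) with hm2
    have hDn : a L1 * b L2 - a L2 * b L1 ≠ 0 := lines_indep hco hA1 hA2 h12 hv1 hv2
    have hDm : m1.1 * m2.2 - m1.2 * m2.1 ≠ 0 := by
      have heq : m1.1 * m2.2 - m1.2 * m2.1
          = fl a b c L1 x * fl a b c L2 x * (a L1 * b L2 - a L2 * b L1) := by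
        simp only [hm1, hm2, Prod.smul_def, smul_eq_mul]
        ring
      rw [heq]
      exact mul_ne_zero (mul_ne_zero hs1 hs2) hDn
    have hwm1 : w.1 * m1.2 - w.2 * m1.1 ≠ 0 := by
      have heq : w.1 * m1.2 - w.2 * m1.1 = fl a b c L1 x * (w.1 * b L1 - w.2 * a L1) := by
        simp only [hm1, Prod.smul_def, smul_eq_mul]; ring
      rw [heq]
      exact mul_ne_zero hs1 (hw L1 hA1)
    have hwm2 : w.1 * m2.2 - w.2 * m2.1 ≠ 0 := by
      have heq : w.1 * m2.2 - w.2 * m2.1 = fl a b c L2 x * (w.1 * b L2 - w.2 * a L2) := by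
        simp only [hm2, Prod.smul_def, smul_eq_mul]; ring
      rw [heq]
      exact mul_ne_zero hs2 (hw L2 hA2)
    obtain ⟨α, β, hdec⟩ := exists_decomp w hDm
    have hTmem : ∀ L ∈ T, L = L1 ∨ L = L2 := by
      intro L hL
      have := hTeq ▸ hL
      simpa using this
    have hconemax : ∀ q : Pt, ‖q‖ < ε → 0 < dot m1 q → 0 < dot m2 q → dot w q ≤ 0 := by
      intro q hq h1 h2
      rw [hm1, dot_smul_left] at h1
      rw [hm2, dot_smul_left] at h2
      have hmemx : v + q ∈ cS a b c A x := by
        apply hloc x hx hsx q hq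
        intro L hLT
        rcases hTmem L hLT with rfl | rfl
        · rw [hfl_add, hv1, zero_add]; linarith [mul_comm (fl a b c L x) (dot (a L, b L) q) ▸ h1]
        · rw [hfl_add, hv2, zero_add]; linarith [mul_comm (fl a b c L x) (dot (a L, b L) q) ▸ h2]
      have := hmax _ (subset_closure hmemx)
      rw [dot_add_right] at this
      linarith
    obtain ⟨hα, hβ⟩ := coef_neg hDm hwm1 hwm2 hdec hε hconemax
    set r1 : ℝ := fl a b c L1 x * fl a b c L1 y with hr1def
    set r2 : ℝ := fl a b c L2 x * fl a b c L2 y with hr2def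
    have hr1ne : r1 ≠ 0 := mul_ne_zero hs1 hs1y
    have hr2ne : r2 ≠ 0 := mul_ne_zero hs2 hs2y
    have hr : r1 < 0 ∨ r2 < 0 := by
      by_contra hcon
      push_neg at hcon
      obtain ⟨hp1, hp2⟩ := hcon
      have hr1pos : 0 < r1 := lt_of_le_of_ne hp1 (Ne.symm hr1ne)
      have hr2pos : 0 < r2 := lt_of_le_of_ne hp2 (Ne.symm hr2ne)
      apply hne
      apply cS_eq_of_signs
      intro L hL
      by_cases hLT : L ∈ T
      · rcases hTmem L hLT with rfl | rfl
        · exact hr1pos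
        · exact hr2pos
      · exact sign_trans (hsx L hL hLT) (hsy L hL hLT)
    obtain ⟨q, hqn, hq1, hq2, hqw⟩ := exists_ascent hDm hdec hα hβ hr1ne hr2ne hr hε
    refine ⟨v + q, ?_, ?_⟩
    · apply hloc y hy hsy q hqn
      intro L hLT
      rcases hTmem L hLT with rfl | rfl
      · rw [hfl_add, hv1, zero_add]
        rw [hm1, dot_smul_left, hr1def] at hq1
        nlinarith [mul_self_pos.mpr hs1, hq1]
      · rw [hfl_add, hv2, zero_add]
        rw [hm2, dot_smul_left, hr2def] at hq2
        nlinarith [mul_self_pos.mpr hs2, hq2]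
    · rw [dot_add_right]
      linarith

variable {a b c : Set Pt → ℝ} {A : Finset (Set Pt)}

lemma sign_iff {u z : ℝ} (hz : z ≠ 0) : 0 < u * z ↔ ((0 < u ↔ 0 < z) ∧ u ≠ 0) := by
  rw [mul_pos_iff]
  constructor
  · rintro (⟨h1, h2⟩ | ⟨h1, h2⟩)
    · exact ⟨iff_of_true h1 h2, ne_of_gt h1⟩
    · exact ⟨iff_of_false (not_lt.mpr h1.le) (not_lt.mpr h2.le), ne_of_lt h1⟩
  · rintro ⟨hiff, hne⟩
    rcases lt_or_gt_of_ne hne with h | h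
    · right
      refine ⟨h, ?_⟩
      rcases lt_or_gt_of_ne hz with h' | h'
      · exact h'
      · exact absurd (hiff.mpr h') (not_lt.mpr h.le)
    · exact Or.inl ⟨h, hiff.mp h⟩

lemma mem_boundedChambers_iff (hco : Hco a b c A) {C : Set Pt} :
    C ∈ boundedChambers A ↔
      ∃ x ∈ Uc A, C = closure (cS a b c A x) ∧ IsBounded (cS a b c A x) := by
  unfold boundedChambers
  constructor
  · rintro ⟨x, hx, h1, h2⟩
    have hx' : x ∈ Uc A := hx
    have hcomp : connectedComponentIn ((⋃ L ∈ A, L)ᶜ) x = cS a b c A x :=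
      comp_eq_cS hco hx'
    rw [hcomp] at h1 h2
    exact ⟨x, hx', h1, h2⟩
  · rintro ⟨x, hx, h1, h2⟩
    have hcomp : connectedComponentIn ((⋃ L ∈ A, L)ᶜ) x = cS a b c A x :=
      comp_eq_cS hco hx
    refine ⟨x, hx, ?_, ?_⟩
    · rw [hcomp]; exact h1
    · rw [hcomp]; exact h2

lemma finite_boundedChambers (hco : Hco a b c A) : (boundedChambers A).Finite := by
  classical
  apply Set.Finite.subset (Set.finite_range
    (fun s : {L // L ∈ A} → Prop =>
      closure {p : Pt | ∀ L : {L // L ∈ A},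
        (0 < fl a b c L.1 p ↔ s L) ∧ fl a b c L.1 p ≠ 0}))
  intro C hC
  obtain ⟨x, hx, hCeq, -⟩ := (mem_boundedChambers_iff hco).mp hC
  refine ⟨fun L => 0 < fl a b c L.1 x, ?_⟩
  have hset : {p : Pt | ∀ L : {L // L ∈ A},
      (0 < fl a b c L.1 p ↔ 0 < fl a b c L.1 x) ∧ fl a b c L.1 p ≠ 0}
      = cS a b c A x := by
    ext p
    simp only [mem_setOf_eq, cS, Subtype.forall]
    constructor
    · intro h L hL
      exact (sign_iff ((mem_Uc_iff hco).mp hx L hL)).mpr (h L hL)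
    · intro h L hL
      exact (sign_iff ((mem_Uc_iff hco).mp hx L hL)).mp (h L hL)
  simp only [hset]
  exact hCeq.symm

lemma exists_w (hco : Hco a b c A) : ∃ w : Pt, ∀ L ∈ A, w.1 * b L - w.2 * a L ≠ 0 := by
  classical
  obtain ⟨p, hp⟩ := Infinite.exists_notMem_finset (A.image (fun L => a L / b L))
  refine ⟨(p, 1), ?_⟩
  intro L hL
  by_cases hb : b L = 0
  · have ha : a L ≠ 0 := by
      intro ha0
      exact (hco L hL).1 (by rw [ha0, hb])
    simp only [hb]
    intro h
    apply ha
    linarith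
  · intro h
    apply hp
    simp only at h
    have hpe : p = a L / b L := by
      rw [eq_div_iff hb]
      linarith
    exact Finset.mem_image.mpr ⟨L, hL, hpe.symm⟩

lemma inter_subset_frontier (hco : Hco a b c A) {x y : Pt}
    (hne : cS a b c A x ≠ cS a b c A y) :
    closure (cS a b c A x) ∩ closure (cS a b c A y) ⊆ frontier (closure (cS a b c A x)) := by
  rintro p ⟨hpx, hpy⟩
  rw [isClosed_closure.frontier_eq, mem_diff]
  refine ⟨hpx, fun hint => ?_⟩
  obtain ⟨t, hts, hto, hpt⟩ := mem_interior.mp hint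
  obtain ⟨q, hq1, hq2⟩ := mem_closure_iff.mp hpy t hto hpt
  have hqU : q ∈ Uc A := cS_subset_Uc hco y hq2
  have hqx : q ∈ cS a b c A x := mem_cS_of_mem_closure hco (hts hq1) hqU
  exact hne (cS_eq_of_mem hqx hq2)

lemma not_isBounded_univ : ¬ IsBounded (univ : Set Pt) := by
  intro h
  obtain ⟨r, hr⟩ := h.subset_closedBall 0
  have hmem := hr (mem_univ ((|r| + 1, 0) : Pt))
  rw [Metric.mem_closedBall] at hmem
  have hdist : dist ((|r| + 1, 0) : Pt) (0 : Pt) = |r| + 1 := by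
    rw [Prod.dist_eq]
    have h1 : dist (|r| + 1) ((0 : Pt).1) = |r| + 1 := by
      rw [Prod.fst_zero, Real.dist_eq, sub_zero]
      exact abs_of_nonneg (by positivity)
    have h2 : dist (0 : ℝ) ((0 : Pt).2) = 0 := by simp
    rw [h1, h2]
    exact sup_eq_left.mpr (by positivity)
  rw [hdist] at hmem
  linarith [le_abs_self r]

end
end Stmt17Aux
open Stmt17Aux in
/-- if a nodal real line arrangement has a nonempty set of
bounded chambers, then the bounded chambers can be enumerated `C₁, …, C_m` so
that for every `k ≥ 2`, the intersection `C_k ∩ (C₁ ∪ ⋯ ∪ C_{k-1})` is a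
proper subset of the boundary `∂C_k`. -/
theorem stmt17 (A : Finset (Set (ℝ × ℝ)))
    (hline : ∀ L ∈ A, IsAffLine L)
    (hnodal : ∀ L₁ ∈ A, ∀ L₂ ∈ A, ∀ L₃ ∈ A,
      L₁ ≠ L₂ → L₁ ≠ L₃ → L₂ ≠ L₃ → L₁ ∩ L₂ ∩ L₃ = ∅)
    (hne : (boundedChambers A).Nonempty) :
    ∃ (m : ℕ) (Ck : Fin m → Set (ℝ × ℝ)),
      Function.Injective Ck ∧
      (∀ C, C ∈ boundedChambers A ↔ ∃ k, Ck k = C) ∧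
      ∀ k : Fin m, 1 ≤ (k : ℕ) →
        (Ck k ∩ ⋃ (j : Fin m) (_ : j < k), Ck j) ⊂ frontier (Ck k) := by
  classical
  choose! a b c hab hLeq using hline
  have hco : Hco a b c A := fun L hL => ⟨hab L hL, hLeq L hL⟩
  obtain ⟨w, hw⟩ := exists_w hco
  have hcont : Continuous (dot w) := by unfold dot; fun_prop
  -- A is nonempty, hence w ≠ 0
  obtain ⟨C0, hC0⟩ := hne
  obtain ⟨x0, hx0U, hC0eq, hC0bd⟩ := (mem_boundedChambers_iff hco).mp hC0
  have hAne : A.Nonempty := by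
    by_contra hA
    rw [Finset.not_nonempty_iff_eq_empty] at hA
    subst hA
    have huniv : cS a b c ∅ x0 = Set.univ := by ext p; simp [cS]
    rw [huniv] at hC0bd
    exact not_isBounded_univ hC0bd
  have hww : 0 < dot w w := by
    obtain ⟨L0, hL0⟩ := hAne
    have hwL := hw L0 hL0
    have h12 : w.1 ≠ 0 ∨ w.2 ≠ 0 := by
      by_contra hcon
      push_neg at hcon
      rw [hcon.1, hcon.2] at hwL
      simp at hwL
    simp only [dot]
    rcases h12 with h | h
    · nlinarith [mul_self_pos.mpr h, mul_self_nonneg w.2]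
    · nlinarith [mul_self_pos.mpr h, mul_self_nonneg w.1]
  set μ : Set Pt → ℝ := fun C => sSup (dot w '' C) with hμ
  -- facts about each chamber
  have hfact : ∀ C ∈ boundedChambers A, ∃ x, x ∈ Uc A ∧ C = closure (cS a b c A x) ∧
      Bornology.IsBounded (cS a b c A x) ∧ IsCompact C ∧
      ∃ v ∈ C, (∀ p ∈ C, dot w p ≤ dot w v) ∧ μ C = dot w v := by
    intro C hC
    obtain ⟨x, hx, hCeq, hbd⟩ := (mem_boundedChambers_iff hco).mp hC
    have hCcomp : IsCompact C := by
      rw [hCeq]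
      exact Metric.isCompact_of_isClosed_isBounded isClosed_closure hbd.closure
    have hCne : C.Nonempty := ⟨x, by rw [hCeq]; exact subset_closure (mem_cS_self hco hx)⟩
    obtain ⟨v, hvC, hvmax⟩ := hCcomp.exists_isMaxOn hCne hcont.continuousOn
    refine ⟨x, hx, hCeq, hbd, hCcomp, v, hvC, fun p hp => hvmax hp, ?_⟩
    exact IsGreatest.csSup_eq ⟨⟨v, hvC, rfl⟩, by rintro s ⟨p, hp, rfl⟩; exact hvmax hp⟩
  have hfin : (boundedChambers A).Finite := finite_boundedChambers hco
  set le : Set Pt → Set Pt → Bool := fun C C' => decide (μ C ≤ μ C') with hle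
  set l : List (Set Pt) := hfin.toFinset.toList.mergeSort le with hl
  have hperm : l.Perm hfin.toFinset.toList := List.mergeSort_perm _ _
  have hnodup : l.Nodup := hperm.nodup_iff.mpr (Finset.nodup_toList _)
  have hinj : Function.Injective l.get := List.nodup_iff_injective_get.mp hnodup
  have hsorted : List.Pairwise (fun C C' => le C C' = true) l := by
    apply List.pairwise_mergeSort
    · intro a' b' c'
      simp only [hle, decide_eq_true_eq]
      exact le_trans
    · intro a' b'
      simp only [hle, Bool.or_eq_true, decide_eq_true_eq]
      exact le_total _ _
  have hmem : ∀ C, C ∈ l ↔ C ∈ boundedChambers A := by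
    intro C
    rw [hperm.mem_iff, Finset.mem_toList, Set.Finite.mem_toFinset]
  have hgetC : ∀ k : Fin l.length, l.get k ∈ boundedChambers A :=
    fun k => (hmem _).mp (List.mem_iff_get.mpr ⟨k, rfl⟩)
  refine ⟨l.length, l.get, hinj, ?_, ?_⟩
  · intro C
    rw [← hmem, List.mem_iff_get]
  · intro k _
    obtain ⟨x, hxU, hkeq, hkbd, hkcomp, v, hvC, hvmax, hμk⟩ := hfact _ (hgetC k)
    -- the subset inclusion
    have hsub : (l.get k ∩ ⋃ (j : Fin l.length) (_ : j < k), l.get j) ⊆ frontier (l.get k) := by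
      rintro p ⟨hpk, hpu⟩
      simp only [Set.mem_iUnion] at hpu
      obtain ⟨j, hjk, hpj⟩ := hpu
      obtain ⟨y, hyU, hjeq, -, -, -⟩ := hfact _ (hgetC j)
      have hneq : l.get j ≠ l.get k := fun h => (ne_of_lt hjk) (hinj h)
      have hSne : cS a b c A x ≠ cS a b c A y := by
        intro h
        apply hneq
        rw [hjeq, hkeq, h]
      rw [hkeq]
      apply inter_subset_frontier hco hSne
      exact ⟨by rw [← hkeq]; exact hpk, by rw [← hjeq]; exact hpj⟩
    rw [Set.ssubset_iff_of_subset hsub]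
    refine ⟨v, ?_, ?_⟩
    · -- v is on the frontier
      have hkcl : IsClosed (l.get k) := by rw [hkeq]; exact isClosed_closure
      rw [hkcl.frontier_eq, Set.mem_diff]
      refine ⟨hvC, fun hint => ?_⟩
      obtain ⟨ε, hε, hball⟩ := Metric.isOpen_iff.mp isOpen_interior v hint
      set t : ℝ := ε / (2 * (‖w‖ + 1)) with htdef
      have htpos : 0 < t := by positivity
      have hmemball : v + t • w ∈ Metric.ball v ε := by
        rw [Metric.mem_ball, dist_eq_norm, add_sub_cancel_left, norm_smul,
          Real.norm_eq_abs, abs_of_pos htpos]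
        have hn : (0:ℝ) ≤ ‖w‖ := norm_nonneg w
        have ht2 : t * (‖w‖ + 1) = ε / 2 := by rw [htdef]; field_simp
        nlinarith
      have hvmem : v + t • w ∈ l.get k := interior_subset (hball hmemball)
      have hc := hvmax _ hvmem
      rw [dot_add_right, dot_smul_right] at hc
      nlinarith
    · -- v is not in any earlier chamber
      intro hvu
      obtain ⟨-, hvu⟩ := hvu
      simp only [Set.mem_iUnion] at hvu
      obtain ⟨j, hjk, hvj⟩ := hvu
      obtain ⟨y, hyU, hjeq, hjbd, hjcomp, -, -, -⟩ := hfact _ (hgetC j)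
      have hneq : l.get j ≠ l.get k := fun h => (ne_of_lt hjk) (hinj h)
      have hSne : cS a b c A x ≠ cS a b c A y := by
        intro h
        apply hneq
        rw [hjeq, hkeq, h]
      obtain ⟨p, hpy, hplt⟩ := key_ascent hco hnodal hw hxU hyU
        (by rw [← hkeq]; exact hvC) (by rw [← hjeq]; exact hvj)
        (fun p hp => hvmax p (by rw [hkeq]; exact hp)) hSne
      have hle1 : μ (l.get j) ≤ μ (l.get k) := by
        have hrel := List.Pairwise.rel_get_of_lt hsorted hjk
        simpa only [hle, decide_eq_true_eq] using hrel
      have hple : dot w p ≤ μ (l.get j) := by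
        apply le_csSup
        · exact hjcomp.bddAbove_image hcont.continuousOn
        · exact ⟨p, by rw [hjeq]; exact subset_closure hpy, rfl⟩
      rw [hμk] at hle1
      linarith
end
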